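/- arXiv:2504.18743 — 2 statements merged into one kernel-verified Lean document; each statement's English description precedes it below -/
import Mathlib

section
/- Suppose the Bellman operator H of a finite Markov decision process with |R(s,a)| ≤ 1 for all (s,a) is a span-seminorm contraction with factor β ∈ (0,1), and suppose Q* : S×A → ℝ and r* ∈ ℝ satisfy H(Q*) − Q* = r*·e. Then p_span(Q*) ≤ 1/(1 − β). -/
/-- The span seminorm of a vector over a finite nonempty index set:
`p_span(x) = (max_i x_i - min_i x_i) / 2`. -/
noncomputable def pspan {I : Type*} [Fintype I] [Nonempty I] (x : I → ℝ) : ℝ :=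
  ((⨆ i, x i) - ⨅ i, x i) / 2

/-- The Bellman operator of a finite MDP:
`[H(Q)](s,a) = R(s,a) + Σ_{s'} p(s'|s,a) · max_{a'} Q(s',a')`. -/
noncomputable def bellman {S A : Type*} [Fintype S] [Nonempty A]
    (p : S × A → S → ℝ) (R : S × A → ℝ) (Q : S × A → ℝ) : S × A → ℝ :=
  fun sa => R sa + ∑ s' : S, p sa s' * ⨆ a' : A, Q (s', a')

/-!
Since `H(Q*) = Q* + r* e` and the span seminorm ignores constants, `p_span(Q*) = p_span(H(Q*))`.
Comparing with `H(0) = R` gives `p_span(Q*) ≤ β p_span(Q*) + p_span(R)`, and `p_span(R) ≤ 1`.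
-/

section pspan

variable {I : Type*} [Fintype I] [Nonempty I]

lemma pspan_add_le (f g : I → ℝ) : pspan (f + g) ≤ pspan f + pspan g := by
  have hsup : (⨆ i, f i + g i) ≤ (⨆ i, f i) + ⨆ i, g i :=
    ciSup_le fun i => add_le_add (le_ciSup (Set.finite_range f).bddAbove i)
      (le_ciSup (Set.finite_range g).bddAbove i)
  have hinf : (⨅ i, f i) + (⨅ i, g i) ≤ ⨅ i, f i + g i :=
    le_ciInf fun i => add_le_add (ciInf_le (Set.finite_range f).bddBelow i)
      (ciInf_le (Set.finite_range g).bddBelow i)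
  simp only [pspan, Pi.add_apply]
  linarith

lemma pspan_add_const (f : I → ℝ) (c : ℝ) : pspan (fun i => f i + c) = pspan f := by
  simp only [pspan, ← ciSup_add (Set.finite_range f).bddAbove,
    ← ciInf_add (Set.finite_range f).bddBelow]
  ring

lemma pspan_le_of_abs_le {f : I → ℝ} {c : ℝ} (hf : ∀ i, |f i| ≤ c) : pspan f ≤ c := by
  have hsup : (⨆ i, f i) ≤ c := ciSup_le fun i => (abs_le.mp (hf i)).2
  have hinf : -c ≤ ⨅ i, f i := le_ciInf fun i => (abs_le.mp (hf i)).1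
  unfold pspan
  linarith

lemma pspan_le_div_of_sub_eq_const {H : (I → ℝ) → I → ℝ} {β : ℝ} (hβ : β < 1)
    (hcontr : ∀ x y, pspan (H x - H y) ≤ β * pspan (x - y))
    {x : I → ℝ} {r : ℝ} (hx : ∀ i, H x i - x i = r) :
    pspan x ≤ pspan (H 0) / (1 - β) := by
  have hHx : H x = fun i => x i + r := funext fun i => by linarith [hx i]
  have key : pspan x ≤ β * pspan x + pspan (H 0) :=
    calc pspan x = pspan (H x) := by rw [hHx, pspan_add_const]
      _ = pspan ((H x - H 0) + H 0) := by rw [sub_add_cancel]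
      _ ≤ pspan (H x - H 0) + pspan (H 0) := pspan_add_le _ _
      _ ≤ β * pspan x + pspan (H 0) := by
        simpa only [sub_zero, add_le_add_iff_right] using hcontr x 0
  rw [le_div_iff₀ (sub_pos.mpr hβ)]
  linarith

end pspan

lemma bellman_zero {S A : Type*} [Fintype S] [Nonempty A] (p : S × A → S → ℝ) (R : S × A → ℝ) :
    bellman p R 0 = R := by
  funext sa
  simp [bellman]

theorem span_Qstar_bound_general {S A : Type*} [Fintype S] [Fintype A] [Nonempty S] [Nonempty A]
    (p : S × A → S → ℝ) (R : S × A → ℝ)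
    (hR : ∀ sa, |R sa| ≤ 1)
    (β : ℝ) (hβ1 : β < 1)
    (hcontr : ∀ Q1 Q2 : S × A → ℝ,
      pspan (bellman p R Q1 - bellman p R Q2) ≤ β * pspan (Q1 - Q2))
    (Qstar : S × A → ℝ) (rstar : ℝ)
    (hfix : ∀ sa, bellman p R Qstar sa - Qstar sa = rstar) :
    pspan Qstar ≤ 1 / (1 - β) :=
  calc pspan Qstar ≤ pspan (bellman p R 0) / (1 - β) :=
        pspan_le_div_of_sub_eq_const hβ1 hcontr hfix
    _ ≤ 1 / (1 - β) := by
        rw [bellman_zero]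
        gcongr
        exact pspan_le_of_abs_le hR

/-- If `|R| ≤ 1`, `H` is a span-seminorm `β`-contraction with `β ∈ (0,1)`, and
`H(Q*) - Q* = r* e`, then `p_span(Q*) ≤ 1/(1 - β)`. -/
theorem span_Qstar_bound {S A : Type*} [Fintype S] [Fintype A] [Nonempty S] [Nonempty A]
    (p : S × A → S → ℝ) (R : S × A → ℝ)
    (hp : ∀ sa s', 0 ≤ p sa s') (hp1 : ∀ sa, ∑ s' : S, p sa s' = 1)
    (hR : ∀ sa, |R sa| ≤ 1)
    (β : ℝ) (hβ0 : 0 < β) (hβ1 : β < 1)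
    (hcontr : ∀ Q1 Q2 : S × A → ℝ,
      pspan (bellman p R Q1 - bellman p R Q2) ≤ β * pspan (Q1 - Q2))
    (Qstar : S × A → ℝ) (rstar : ℝ)
    (hfix : ∀ sa, bellman p R Qstar sa - Qstar sa = rstar) :
    pspan Qstar ≤ 1 / (1 - β) :=
  span_Qstar_bound_general p R hR β hβ1 hcontr Qstar rstar hfix
end

section
/- Suppose the Bellman operator H of a finite Markov decision process is a span-seminorm contraction with factor β ∈ (0,1), and suppose Q* : S×A → ℝ and r* ∈ ℝ satisfy H(Q*) − Q* = r*·e with r* ≠ 0. Let d : S×A → ℝ satisfy d(s,a) > 0 for all (s,a), Σ_{(s,a)} d(s,a) = 1, and d not constant (i.e., max_{(s,a)} d(s,a) > min_{(s,a)} d(s,a)). Then {Q : p_span(H̄(Q) − Q) = 0} ∩ {Q : p_span(H(Q) − Q) = 0} = ∅, where H̄ is the asynchronous Bellman operator associated with d. -/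
/-- The asynchronous Bellman operator associated with `d`:
`[H̄(Q)](s,a) = (1 - d(s,a))·Q(s,a) + d(s,a)·[H(Q)](s,a)`. -/
noncomputable def asyncBellman {S A : Type*} [Fintype S] [Nonempty A]
    (p : S × A → S → ℝ) (R : S × A → ℝ) (d : S × A → ℝ) (Q : S × A → ℝ) : S × A → ℝ :=
  fun sa => (1 - d sa) * Q sa + d sa * bellman p R Q sa

lemma pspan_zero_const {I : Type*} [Fintype I] [Nonempty I] {x : I → ℝ}
    (h : pspan x = 0) : ∀ i j, x i = x j := by
  unfold pspan at h
  have hbdd : BddAbove (Set.range x) := Finite.bddAbove_range x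
  have hbdd' : BddBelow (Set.range x) := Finite.bddBelow_range x
  have hsup : (⨆ i, x i) = ⨅ i, x i := by linarith
  intro i j
  have h1 := le_ciSup hbdd i
  have h2 := ciInf_le hbdd' i
  have h3 := le_ciSup hbdd j
  have h4 := ciInf_le hbdd' j
  linarith

lemma pspan_nonneg {I : Type*} [Fintype I] [Nonempty I] (x : I → ℝ) :
    0 ≤ pspan x := by
  unfold pspan
  obtain ⟨i⟩ := (inferInstance : Nonempty I)
  have h1 := le_ciSup (Finite.bddAbove_range x) i
  have h2 := ciInf_le (Finite.bddBelow_range x) i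
  linarith

lemma ciSup_sub_const {I : Type*} [Fintype I] [Nonempty I] (x : I → ℝ) (c : ℝ) :
    (⨆ i, (x i - c)) = (⨆ i, x i) - c := by
  rw [eq_sub_iff_add_eq, ciSup_add (Finite.bddAbove_range _)]
  simp

lemma ciInf_sub_const {I : Type*} [Fintype I] [Nonempty I] (x : I → ℝ) (c : ℝ) :
    (⨅ i, (x i - c)) = (⨅ i, x i) - c := by
  rw [eq_sub_iff_add_eq, ciInf_add (Finite.bddBelow_range _)]
  simp

lemma pspan_sub_const {I : Type*} [Fintype I] [Nonempty I] (x : I → ℝ) (c : ℝ) :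
    pspan (fun i => x i - c) = pspan x := by
  unfold pspan
  rw [ciSup_sub_const, ciInf_sub_const]
  ring

lemma ciSup_congr_const {I : Type*} [Fintype I] [Nonempty I] {x : I → ℝ} {i0 : I}
    (h : ∀ i, x i = x i0) : (⨆ i, x i) = x i0 :=
  le_antisymm (ciSup_le fun i => (h i).le) (le_ciSup (Finite.bddAbove_range x) i0)

lemma ciInf_congr_const {I : Type*} [Fintype I] [Nonempty I] {x : I → ℝ} {i0 : I}
    (h : ∀ i, x i = x i0) : (⨅ i, x i) = x i0 :=
  le_antisymm (ciInf_le (Finite.bddBelow_range x) i0) (le_ciInf fun i => (h i).ge)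

/-- Shift invariance of the Bellman operator. -/
lemma bellman_shift {S A : Type*} [Fintype S] [Fintype A] [Nonempty A]
    (p : S × A → S → ℝ) (R : S × A → ℝ) (hp1 : ∀ sa, ∑ s' : S, p sa s' = 1)
    (Q : S × A → ℝ) (c : ℝ) (sa : S × A) :
    bellman p R (fun sa' => Q sa' + c) sa = bellman p R Q sa + c := by
  unfold bellman
  have key : ∀ s' : S, (⨆ a' : A, (Q (s', a') + c)) = (⨆ a' : A, Q (s', a')) + c := by
    intro s'
    exact (ciSup_add (f := fun a' : A => Q (s', a')) (Finite.bddAbove_range _) c).symm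
  simp only [key]
  have : ∑ s' : S, p sa s' * ((⨆ a' : A, Q (s', a')) + c)
      = ∑ s' : S, (p sa s' * (⨆ a' : A, Q (s', a')) + p sa s' * c) := by
    apply Finset.sum_congr rfl; intros; ring
  rw [this, Finset.sum_add_distrib, ← Finset.sum_mul, hp1]
  ring

/-- If `H` is a span-seminorm `β`-contraction with fixed-point equation
`H(Q*) - Q* = r* e`, `r* ≠ 0`, and `d` is a non-constant positive probability vector,
then the solution sets of the asynchronous and original Bellman equations are disjoint. -/
theorem async_solutions_disjoint {S A : Type*} [Fintype S] [Fintype A] [Nonempty S] [Nonempty A]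
    (p : S × A → S → ℝ) (R : S × A → ℝ)
    (hp : ∀ sa s', 0 ≤ p sa s') (hp1 : ∀ sa, ∑ s' : S, p sa s' = 1)
    (β : ℝ) (hβ0 : 0 < β) (hβ1 : β < 1)
    (hcontr : ∀ Q1 Q2 : S × A → ℝ,
      pspan (bellman p R Q1 - bellman p R Q2) ≤ β * pspan (Q1 - Q2))
    (Qstar : S × A → ℝ) (rstar : ℝ) (hr : rstar ≠ 0)
    (hfix : ∀ sa, bellman p R Qstar sa - Qstar sa = rstar)
    (d : S × A → ℝ) (hd0 : ∀ sa, 0 < d sa) (hdsum : ∑ sa : S × A, d sa = 1)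
    (hdnc : (⨅ sa : S × A, d sa) < ⨆ sa : S × A, d sa) :
    {Q : S × A → ℝ | pspan (fun sa => asyncBellman p R d Q sa - Q sa) = 0} ∩
      {Q : S × A → ℝ | pspan (fun sa => bellman p R Q sa - Q sa) = 0} = ∅ := by
  rw [Set.eq_empty_iff_forall_notMem]
  rintro Q ⟨h1, h2⟩
  simp only [Set.mem_setOf_eq] at h1 h2
  obtain ⟨sa0⟩ := (inferInstance : Nonempty (S × A))
  -- H(Q) - Q is constant, say c
  set c := bellman p R Q sa0 - Q sa0 with hc
  have hconst : ∀ sa, bellman p R Q sa - Q sa = c :=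
    fun sa => pspan_zero_const h2 sa sa0
  -- H̄(Q) - Q = d · c is constant
  have hasync : ∀ sa, asyncBellman p R d Q sa - Q sa = d sa * c := by
    intro sa
    unfold asyncBellman
    rw [show bellman p R Q sa = Q sa + c from by linarith [hconst sa]]
    ring
  have hdc : ∀ sa sa', d sa * c = d sa' * c := by
    intro sa sa'
    rw [← hasync sa, ← hasync sa']
    exact pspan_zero_const h1 sa sa'
  by_cases hc0 : c = 0
  · -- H(Q) = Q; contraction forces Q = Q* + const, then r* = 0
    have hQfix : ∀ sa, bellman p R Q sa = Q sa := by
      intro sa; have := hconst sa; rw [hc0] at this; linarith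
    have hspan := hcontr Q Qstar
    have heq : (bellman p R Q - bellman p R Qstar) = fun sa => (Q - Qstar) sa - rstar := by
      funext sa
      have := hfix sa
      simp only [Pi.sub_apply, hQfix sa]
      linarith
    rw [heq, pspan_sub_const] at hspan
    have hnn := pspan_nonneg (Q - Qstar)
    have hz : pspan (Q - Qstar) = 0 := by nlinarith
    -- Q - Q* constant k
    have hk : ∀ sa, Q sa = Qstar sa + ((Q - Qstar) sa0) := by
      intro sa
      have := pspan_zero_const hz sa sa0
      simp only [Pi.sub_apply] at this ⊢
      linarith
    set k := (Q - Qstar) sa0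
    have hQeq : Q = fun sa => Qstar sa + k := funext hk
    have := hQfix sa0
    rw [hQeq, bellman_shift p R hp1 Qstar k sa0] at this
    have hfx := hfix sa0
    simp only at this
    exact hr (by linarith)
  · -- c ≠ 0 ⇒ d constant, contradicting hdnc
    have hdconst : ∀ sa, d sa = d sa0 := by
      intro sa
      have := hdc sa sa0
      exact mul_right_cancel₀ hc0 this
    have hs : (⨆ sa : S × A, d sa) = d sa0 := ciSup_congr_const hdconst
    have hi : (⨅ sa : S × A, d sa) = d sa0 := ciInf_congr_const hdconst
    rw [hs, hi] at hdnc
    exact lt_irrefl _ hdnc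
end
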